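/- If α:[0,1]→ℝ^d is absolutely continuous and φ:[0,1]→[0,1] is monotonic, absolutely continuous, and surjective, then the reparametrized curve α∘φ is absolutely continuous and produces the same measure: μ_{α∘φ} = μ_α. -/

import Mathlib

open MeasureTheory Set
open scoped RealInnerProductSpace ENNReal NNReal

noncomputable section

/-- Euclidean space `ℝ^d`. -/
abbrev Euc (d : ℕ) : Type := EuclideanSpace ℝ (Fin d)

/-- The unit sphere `S^{d-1}` in `ℝ^d`. -/
abbrev Sph (d : ℕ) : Type := Metric.sphere (0 : Euc d) 1

/-- The antipodal equivalence relation on the sphere. -/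
def projRel (d : ℕ) : Setoid (Sph d) where
  r x y := (x : Euc d) = (y : Euc d) ∨ (x : Euc d) = -(y : Euc d)
  iseqv := by
    refine ⟨fun x => Or.inl rfl, ?_, ?_⟩
    · rintro x y (h | h)
      · exact Or.inl h.symm
      · exact Or.inr (by rw [h, neg_neg])
    · rintro x y z (h1 | h1) (h2 | h2)
      · exact Or.inl (h1.trans h2)
      · exact Or.inr (h1.trans h2)
      · exact Or.inr (by rw [h1, h2])
      · exact Or.inl (by rw [h1, h2, neg_neg])

/-- Real projective space `P^{d-1}`, as the quotient of the sphere identifying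
antipodal points. -/
abbrev Proj (d : ℕ) : Type := Quotient (projRel d)

/-- The projection `π : S^{d-1} → P^{d-1}`. -/
def projQ {d : ℕ} (x : Sph d) : Proj d := Quotient.mk (projRel d) x

/-- The unit vector in the direction of a nonzero vector `v`. -/
def unitize {d : ℕ} (v : Euc d) (hv : v ≠ 0) : Sph d :=
  ⟨‖v‖⁻¹ • v, by
    rw [mem_sphere_zero_iff_norm, norm_smul, norm_inv, norm_norm,
      inv_mul_cancel₀ (norm_ne_zero_iff.mpr hv)]⟩

/-- The degree-1 homogeneous extension `f̂ : ℝ^d → ℝ` of a function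
`f : P^{d-1} → ℝ`, determined by `f̂(rξ) = |r| f(π ξ)` for `ξ` on the sphere. -/
def hext {d : ℕ} (f : Proj d → ℝ) (v : Euc d) : ℝ :=
  haveI := Classical.propDecidable (v = 0)
  if hv : v = 0 then 0 else ‖v‖ * f (projQ (unitize v hv))

/-- `IsACDeriv α g` : the curve `α` is absolutely continuous on `[0,1]`
with (a.e.) derivative `g`, i.e. `α` is the indefinite integral of the
integrable function `g`. -/
def IsACDeriv {V : Type*} [NormedAddCommGroup V] [NormedSpace ℝ V]
    (α g : ℝ → V) : Prop :=
  IntervalIntegrable g volume 0 1 ∧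
  ∀ t ∈ Icc (0:ℝ) 1, α t = α 0 + ∫ s in (0:ℝ)..t, g s

/-- `IsCurveMeasure g μ` : `μ` is the measure on projective space associated
(via the Riesz representation) to a curve with derivative `g`; it is the finite
Borel measure satisfying `∫ f dμ = ∫_0^1 f̂(g t) dt` for all continuous `f`. -/
def IsCurveMeasure {d : ℕ} (g : ℝ → Euc d) (μ : Measure (Proj d)) : Prop :=
  IsFiniteMeasure μ ∧
  ∀ f : Proj d → ℝ, Continuous f → ∫ x, f x ∂μ = ∫ t in (0:ℝ)..1, hext f (g t)

/-!
Write `ψ` for the derivative of `φ`. For monotone `φ`, pushing the measure `ψ dt` on `[a, b]`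
forward along `φ` gives Lebesgue measure on `[φ a, φ b]`, so `∫ₐᵇ ψ • G ∘ φ = ∫_{φ a}^{φ b} G`
for every integrable `G`; the antitone case follows by replacing `φ` with `-φ`. With `G = g`
this shows that `α ∘ φ` has derivative `ψ • g ∘ φ`. Since `hext f (r • v) = |r| * hext f v`,
the integrand `hext f (ψ • g ∘ φ)` equals `|ψ| • hext f ∘ g ∘ φ`, and the change of variables, with
`{φ 0, φ 1} = {0, 1}`, turns its integral into `∫₀¹ hext f ∘ g`. Any other derivative of
`α ∘ φ` agrees with `ψ • g ∘ φ` a.e. by Lebesgue's differentiation theorem, and a finite measure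
on `P^{d-1}` is determined by the integrals of continuous functions, because `x ↦ x xᵀ` embeds
`P^{d-1}` measurably into a space of matrices.
-/

open Filter Topology
open scoped Interval

lemma accPt_Icc_of_mem_Ioo {a b x : ℝ} (hx : x ∈ Ioo a b) : AccPt x (𝓟 (Icc a b)) := by
  rw [AccPt, inf_eq_left.2 <| le_principal_iff.2 <|
    mem_nhdsWithin_of_mem_nhds (Icc_mem_nhds hx.1 hx.2)]
  infer_instance

lemma MonotoneOn.exists_preimage_Iic_inter_Ioc {φ : ℝ → ℝ} {a b : ℝ} (hab : a ≤ b)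
    (hmono : MonotoneOn φ (Icc a b)) (hcont : ContinuousOn φ (Icc a b)) (c : ℝ) :
    ∃ u ∈ Icc a b, φ ⁻¹' Iic c ∩ Ioc a b = Ioc a u ∧ φ u = max (φ a) (min (φ b) c) := by
  have ha : a ∈ Icc a b := left_mem_Icc.2 hab
  have hb : b ∈ Icc a b := right_mem_Icc.2 hab
  rcases lt_or_ge c (φ a) with hc | hc
  · refine ⟨a, ha, ?_, (max_eq_left ((min_le_right _ _).trans hc.le)).symm⟩
    rw [Ioc_self, eq_empty_iff_forall_notMem]
    rintro t ⟨htc, hta, htb⟩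
    exact (hc.trans_le (hmono ha ⟨hta.le, htb⟩ hta.le)).not_ge htc
  have hclosed : IsClosed (Icc a b ∩ φ ⁻¹' Iic c) :=
    hcont.preimage_isClosed_of_isClosed isClosed_Icc isClosed_Iic
  obtain ⟨u, ⟨hu, huc⟩, hgreat⟩ :=
    (isCompact_Icc.of_isClosed_subset hclosed inter_subset_left).exists_isGreatest ⟨a, ha, hc⟩
  refine ⟨u, hu, ?_, ?_⟩
  · ext t
    constructor
    · rintro ⟨htc, hta, htb⟩
      exact ⟨hta, hgreat ⟨⟨hta.le, htb⟩, htc⟩⟩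
    · rintro ⟨hta, htu⟩
      exact ⟨(hmono ⟨hta.le, htu.trans hu.2⟩ hu htu).trans huc, hta, htu.trans hu.2⟩
  rw [max_eq_right (le_min (hmono ha hb hab) hc)]
  rcases le_total (φ b) c with hbc | hcb
  · rw [min_eq_left hbc, le_antisymm hu.2 (hgreat ⟨hb, hbc⟩)]
  · obtain ⟨v, hv, hφv⟩ := intermediate_value_Icc hu.2 (hcont.mono (Icc_subset_Icc hu.1 le_rfl))
      ⟨huc, hcb⟩
    rw [min_eq_right hcb, ← hφv, le_antisymm (hgreat ⟨⟨hu.1.trans hv.1, hv.2⟩, hφv.le⟩) hv.1]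

def IsACDerivOn {V : Type*} [NormedAddCommGroup V] [NormedSpace ℝ V]
    (α g : ℝ → V) (a b : ℝ) : Prop :=
  IntervalIntegrable g volume a b ∧ ∀ t ∈ Icc a b, α t = α a + ∫ s in a..t, g s

lemma IsACDeriv.isACDerivOn {V : Type*} [NormedAddCommGroup V] [NormedSpace ℝ V]
    {α g : ℝ → V} (h : IsACDeriv α g) : IsACDerivOn α g 0 1 := h

namespace IsACDerivOn

section General

variable {V : Type*} [NormedAddCommGroup V] [NormedSpace ℝ V] {α g : ℝ → V} {a b c d : ℝ}

lemma integral_eq_sub (h : IsACDerivOn α g a b) (hc : c ∈ Icc a b) (hd : d ∈ Icc a b) :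
    ∫ t in c..d, g t = α d - α c := by
  have hsub : ∀ x ∈ Icc a b, IntervalIntegrable g volume a x := fun x hx =>
    h.1.mono_set (uIcc_subset_uIcc left_mem_uIcc (Icc_subset_uIcc hx))
  rw [h.2 d hd, h.2 c hc, add_sub_add_left_eq_sub]
  exact (intervalIntegral.integral_interval_sub_left (hsub d hd) (hsub c hc)).symm

lemma mono (h : IsACDerivOn α g a b) (hc : c ∈ Icc a b) (hd : d ∈ Icc a b) :
    IsACDerivOn α g c d :=
  ⟨h.1.mono_set (uIcc_subset_uIcc (Icc_subset_uIcc hc) (Icc_subset_uIcc hd)), fun t ht => by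
    have ht' : t ∈ Icc a b := ⟨hc.1.trans ht.1, ht.2.trans hd.2⟩
    rw [h.integral_eq_sub hc ht', add_sub_cancel]⟩

protected lemma neg (h : IsACDerivOn α g a b) : IsACDerivOn (-α) (-g) a b :=
  ⟨h.1.neg, fun t ht => by simp [h.2 t ht, intervalIntegral.integral_neg]; abel⟩

lemma continuousOn (h : IsACDerivOn α g a b) : ContinuousOn α (Icc a b) := by
  have hprim := intervalIntegral.continuousOn_primitive_interval
    ((intervalIntegrable_iff' (by finiteness)).1 h.1)
  exact ((continuousOn_const.add hprim).mono Icc_subset_uIcc).congr h.2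

lemma ae_hasDerivAt [CompleteSpace V] (h : IsACDerivOn α g a b) :
    ∀ᵐ x, x ∈ Ioo a b → HasDerivAt α (g x) x := by
  filter_upwards [h.1.ae_hasDerivAt_integral] with x hx hxab
  have hx' := (hx (Icc_subset_uIcc (Ioo_subset_Icc_self hxab)) a left_mem_uIcc).const_add (α a)
  refine hx'.congr_of_eventuallyEq ?_
  filter_upwards [Icc_mem_nhds hxab.1 hxab.2] with t ht using h.2 t ht

lemma ae_eq [CompleteSpace V] {g' : ℝ → V} (h : IsACDerivOn α g a b)
    (h' : IsACDerivOn α g' a b) : g =ᵐ[volume.restrict (Ioc a b)] g' := by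
  rw [← Measure.restrict_congr_set Ioo_ae_eq_Ioc, EventuallyEq,
    ae_restrict_iff' measurableSet_Ioo]
  filter_upwards [h.ae_hasDerivAt, h'.ae_hasDerivAt] with x hx hx' hxab
  exact (hx hxab).unique (hx' hxab)

end General

variable {φ ψ : ℝ → ℝ} {a b : ℝ}

lemma ae_nonneg_of_monotoneOn (h : IsACDerivOn φ ψ a b) (hmono : MonotoneOn φ (Icc a b)) :
    0 ≤ᵐ[volume.restrict (Ioc a b)] ψ := by
  rw [← Measure.restrict_congr_set Ioo_ae_eq_Ioc, EventuallyLE,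
    ae_restrict_iff' measurableSet_Ioo]
  filter_upwards [h.ae_hasDerivAt] with x hx hxab
  exact (hx hxab).hasDerivWithinAt.nonneg_of_monotoneOn (accPt_Icc_of_mem_Ioo hxab) hmono

lemma ae_nonpos_of_antitoneOn (h : IsACDerivOn φ ψ a b) (hanti : AntitoneOn φ (Icc a b)) :
    ψ ≤ᵐ[volume.restrict (Ioc a b)] 0 := by
  rw [← Measure.restrict_congr_set Ioo_ae_eq_Ioc, EventuallyLE,
    ae_restrict_iff' measurableSet_Ioo]
  filter_upwards [h.ae_hasDerivAt] with x hx hxab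
  exact (hx hxab).hasDerivWithinAt.nonpos_of_antitoneOn (accPt_Icc_of_mem_Ioo hxab) hanti

theorem map_withDensity (hab : a ≤ b) (h : IsACDerivOn φ ψ a b)
    (hmono : MonotoneOn φ (Icc a b)) :
    ((volume.restrict (Ioc a b)).withDensity fun t => ENNReal.ofReal (ψ t)).map φ =
      volume.restrict (Ioc (φ a) (φ b)) := by
  have hψ : IntegrableOn ψ (Ioc a b) := h.1.1
  have hφ : AEMeasurable φ (volume.restrict (Ioc a b)) :=
    (h.continuousOn.aemeasurable measurableSet_Icc).mono_measure
      (Measure.restrict_mono Ioc_subset_Icc_self le_rfl)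
  have := isFiniteMeasure_withDensity_ofReal hψ.2
  refine Measure.ext_of_Iic _ _ fun c => ?_
  obtain ⟨u, hu, hpre, hφu⟩ := hmono.exists_preimage_Iic_inter_Ioc hab h.continuousOn c
  rw [Measure.map_apply_of_aemeasurable (hφ.mono_ac (withDensity_absolutelyContinuous _ _))
      measurableSet_Iic, withDensity_apply', Measure.restrict_restrict' measurableSet_Ioc, hpre,
    ← ofReal_integral_eq_lintegral_ofReal (hψ.mono_set (Ioc_subset_Ioc le_rfl hu.2))
      (ae_restrict_of_ae_restrict_of_subset (Ioc_subset_Ioc le_rfl hu.2)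
        (h.ae_nonneg_of_monotoneOn hmono)),
    ← intervalIntegral.integral_of_le hu.1, h.integral_eq_sub (left_mem_Icc.2 hab) hu, hφu,
    Measure.restrict_apply measurableSet_Iic, inter_comm, Ioc_inter_Iic, Real.volume_Ioc,
    ← max_sub_sub_right, sub_self, ENNReal.ofReal_max, ENNReal.ofReal_zero, zero_max]

theorem integral_smul_comp_of_monotoneOn {V : Type*} [NormedAddCommGroup V] [NormedSpace ℝ V]
    (hab : a ≤ b) (h : IsACDerivOn φ ψ a b) (hmono : MonotoneOn φ (Icc a b)) {G : ℝ → V}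
    (hG : IntervalIntegrable G volume (φ a) (φ b)) :
    IntervalIntegrable (fun t => ψ t • G (φ t)) volume a b ∧
      ∫ t in a..b, ψ t • G (φ t) = ∫ y in φ a..φ b, G y := by
  set W := (volume.restrict (Ioc a b)).withDensity fun t => ENNReal.ofReal (ψ t)
  have hmap : W.map φ = volume.restrict (Ioc (φ a) (φ b)) := h.map_withDensity hab hmono
  have hφab : φ a ≤ φ b := hmono (left_mem_Icc.2 hab) (right_mem_Icc.2 hab) hab
  have hf : AEMeasurable (fun t => (ψ t).toNNReal) (volume.restrict (Ioc a b)) :=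
    h.1.1.aemeasurable.real_toNNReal
  have hφ : AEMeasurable φ W :=
    ((h.continuousOn.aemeasurable measurableSet_Icc).mono_measure
      (Measure.restrict_mono Ioc_subset_Icc_self le_rfl)).mono_ac
        (withDensity_absolutelyContinuous _ _)
  have hGW : Integrable G (W.map φ) := by rw [hmap]; exact hG.1
  have hcongr : (fun t => (ψ t).toNNReal • G (φ t)) =ᵐ[volume.restrict (Ioc a b)]
      fun t => ψ t • G (φ t) := by
    filter_upwards [h.ae_nonneg_of_monotoneOn hmono] with t ht
    simp only [NNReal.smul_def, Real.coe_toNNReal _ ht]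
  refine ⟨(intervalIntegrable_iff_integrableOn_Ioc_of_le hab).2
    (((integrable_withDensity_iff_integrable_smul₀ hf).1
      ((integrable_map_measure hGW.aestronglyMeasurable hφ).1 hGW)).congr hcongr), ?_⟩
  rw [intervalIntegral.integral_of_le hab, intervalIntegral.integral_of_le hφab,
    ← integral_congr_ae hcongr, ← integral_withDensity_eq_integral_smul₀ hf, ← hmap,
    integral_map hφ hGW.aestronglyMeasurable]
  rfl

theorem integral_smul_comp_of_antitoneOn {V : Type*} [NormedAddCommGroup V] [NormedSpace ℝ V]
    (hab : a ≤ b) (h : IsACDerivOn φ ψ a b) (hanti : AntitoneOn φ (Icc a b)) {G : ℝ → V}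
    (hG : IntervalIntegrable G volume (φ a) (φ b)) :
    IntervalIntegrable (fun t => ψ t • G (φ t)) volume a b ∧
      ∫ t in a..b, ψ t • G (φ t) = ∫ y in φ a..φ b, G y := by
  obtain ⟨hint, heq⟩ := h.neg.integral_smul_comp_of_monotoneOn hab hanti.neg
    (G := fun y => G (-y)) (by simpa using (IntervalIntegrable.iff_comp_neg).1 hG)
  simp only [Pi.neg_apply, neg_neg, neg_smul, intervalIntegral.integral_neg,
    intervalIntegral.integral_comp_neg] at hint heq
  refine ⟨by simpa [Pi.neg_def] using hint.neg, ?_⟩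
  rw [← neg_inj, heq, intervalIntegral.integral_symm]

theorem integral_smul_comp {V : Type*} [NormedAddCommGroup V] [NormedSpace ℝ V]
    (hab : a ≤ b) (h : IsACDerivOn φ ψ a b)
    (hmono : MonotoneOn φ (Icc a b) ∨ AntitoneOn φ (Icc a b)) {G : ℝ → V}
    (hG : IntervalIntegrable G volume (φ a) (φ b)) :
    IntervalIntegrable (fun t => ψ t • G (φ t)) volume a b ∧
      ∫ t in a..b, ψ t • G (φ t) = ∫ y in φ a..φ b, G y :=
  hmono.elim (fun hm => h.integral_smul_comp_of_monotoneOn hab hm hG)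
    (fun ha => h.integral_smul_comp_of_antitoneOn hab ha hG)

theorem integral_abs_smul_comp {V : Type*} [NormedAddCommGroup V] [NormedSpace ℝ V]
    (hab : a ≤ b) (h : IsACDerivOn φ ψ a b)
    (hmono : MonotoneOn φ (Icc a b) ∨ AntitoneOn φ (Icc a b)) {G : ℝ → V}
    (hG : IntervalIntegrable G volume (φ a) (φ b)) :
    ∫ t in Ioc a b, |ψ t| • G (φ t) = ∫ y in Ι (φ a) (φ b), G y := by
  have ha := left_mem_Icc.2 hab
  have hb := right_mem_Icc.2 hab
  rcases hmono with hmono | hanti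
  · have hφ := hmono ha hb hab
    rw [uIoc_of_le hφ, ← intervalIntegral.integral_of_le hφ,
      ← (h.integral_smul_comp_of_monotoneOn hab hmono hG).2, intervalIntegral.integral_of_le hab]
    refine integral_congr_ae ?_
    filter_upwards [h.ae_nonneg_of_monotoneOn hmono] with t ht
    rw [abs_of_nonneg ht]
  · have hφ := hanti ha hb hab
    rw [uIoc_of_ge hφ, ← intervalIntegral.integral_of_le hφ, intervalIntegral.integral_symm,
      ← (h.integral_smul_comp_of_antitoneOn hab hanti hG).2, intervalIntegral.integral_of_le hab,
      ← integral_neg]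
    refine integral_congr_ae ?_
    filter_upwards [h.ae_nonpos_of_antitoneOn hanti] with t ht
    rw [abs_of_nonpos ht, neg_smul]

theorem comp {V : Type*} [NormedAddCommGroup V] [NormedSpace ℝ V] {α g : ℝ → V} {p q : ℝ}
    (hα : IsACDerivOn α g p q) (hab : a ≤ b) (hφ : IsACDerivOn φ ψ a b)
    (hmono : MonotoneOn φ (Icc a b) ∨ AntitoneOn φ (Icc a b))
    (hmaps : MapsTo φ (Icc a b) (Icc p q)) :
    IsACDerivOn (fun s => α (φ s)) (fun t => ψ t • g (φ t)) a b := by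
  have ha : a ∈ Icc a b := left_mem_Icc.2 hab
  have key : ∀ t ∈ Icc a b, IntervalIntegrable (fun t => ψ t • g (φ t)) volume a t ∧
      ∫ s in a..t, ψ s • g (φ s) = α (φ t) - α (φ a) := fun t ht => by
    have hsub : Icc a t ⊆ Icc a b := Icc_subset_Icc le_rfl ht.2
    rw [← hα.integral_eq_sub (hmaps ha) (hmaps ht)]
    exact (hφ.mono ha ht).integral_smul_comp ht.1 (hmono.imp (·.mono hsub) (·.mono hsub))
      (hα.1.mono_set (uIcc_subset_uIcc (Icc_subset_uIcc (hmaps ha)) (Icc_subset_uIcc (hmaps ht))))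
  exact ⟨(key b (right_mem_Icc.2 hab)).1, fun t ht => by rw [(key t ht).2, add_sub_cancel]⟩

end IsACDerivOn

lemma uIoc_eq_of_surjOn {φ : ℝ → ℝ} {a b c d : ℝ} (hab : a ≤ b)
    (hmono : MonotoneOn φ (Icc a b) ∨ AntitoneOn φ (Icc a b))
    (hmaps : MapsTo φ (Icc a b) (Icc c d)) (hsurj : SurjOn φ (Icc a b) (Icc c d)) :
    Ι (φ a) (φ b) = Ioc c d := by
  have himage : φ '' Icc a b ⊆ uIcc (φ a) (φ b) :=
    hmono.elim (·.image_Icc_subset.trans Icc_subset_uIcc)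
      (·.image_Icc_subset.trans Icc_subset_uIcc')
  have heq : uIcc (φ a) (φ b) = Icc c d :=
    (uIcc_subset_Icc (hmaps (left_mem_Icc.2 hab)) (hmaps (right_mem_Icc.2 hab))).antisymm
      (hsurj.trans himage)
  obtain ⟨hmin, hmax⟩ := (Icc_eq_Icc_iff inf_le_sup).1 heq
  show Ioc (φ a ⊓ φ b) (φ a ⊔ φ b) = Ioc c d
  rw [hmin, hmax]

section Projective

variable {d : ℕ}

lemma projQ_unitize_smul {v : Euc d} (hv : v ≠ 0) {r : ℝ} (hr : r ≠ 0) :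
    projQ (unitize (r • v) (smul_ne_zero hr hv)) = projQ (unitize v hv) := by
  apply Quotient.sound
  show ‖r • v‖⁻¹ • (r • v) = ‖v‖⁻¹ • v ∨ ‖r • v‖⁻¹ • (r • v) = -(‖v‖⁻¹ • v)
  have hv' : ‖v‖ ≠ 0 := norm_ne_zero_iff.2 hv
  rw [norm_smul, Real.norm_eq_abs, smul_smul]
  rcases hr.lt_or_gt with hr | hr
  · right
    rw [abs_of_neg hr, ← neg_smul]
    congr 1
    field_simp
  · left
    rw [abs_of_pos hr]
    congr 1
    field_simp

lemma hext_smul (f : Proj d → ℝ) (r : ℝ) (v : Euc d) : hext f (r • v) = |r| * hext f v := by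
  rcases eq_or_ne v 0 with rfl | hv
  · simp [hext]
  rcases eq_or_ne r 0 with rfl | hr
  · simp [hext]
  rw [hext, dif_neg (smul_ne_zero hr hv), hext, dif_neg hv, projQ_unitize_smul hv hr, norm_smul,
    Real.norm_eq_abs, mul_assoc]

lemma exists_abs_hext_le {f : Proj d → ℝ} (hf : Continuous f) :
    ∃ C, ∀ v, |hext f v| ≤ C * ‖v‖ := by
  obtain ⟨C, hC⟩ := isCompact_univ.exists_bound_of_continuousOn hf.continuousOn
  refine ⟨C, fun v => ?_⟩
  rw [hext]
  split_ifs with hv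
  · simp [hv]
  · rw [abs_mul, abs_norm, mul_comm]
    exact mul_le_mul_of_nonneg_right (hC _ (mem_univ _)) (norm_nonneg v)

lemma continuous_hext {f : Proj d → ℝ} (hf : Continuous f) : Continuous (hext f) := by
  obtain ⟨C, hC⟩ := exists_abs_hext_le hf
  refine continuous_iff_continuousAt.2 fun v₀ => ?_
  rcases eq_or_ne v₀ 0 with rfl | hv₀
  · have hlim : Tendsto (fun v : Euc d => C * ‖v‖) (𝓝 0) (𝓝 0) := by
      simpa only [mul_zero] using tendsto_norm_zero.const_mul C
    simpa [ContinuousAt, hext] using squeeze_zero_norm hC hlim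
  have hcont : Continuous fun v : {v : Euc d // v ≠ 0} =>
      ‖(v : Euc d)‖ * f (projQ (unitize v v.2)) :=
    continuous_subtype_val.norm.mul <| hf.comp <| continuous_quotient_mk'.comp <|
      (((continuous_subtype_val.norm).inv₀ fun v => norm_ne_zero_iff.2 v.2).smul
        continuous_subtype_val).subtype_mk _
  have hon : ContinuousOn (hext f) {v | v ≠ 0} :=
    continuousOn_iff_continuous_domRestrict.2 <| hcont.congr fun v => by simp [hext, v.2]
  exact hon.continuousAt (isOpen_compl_singleton.mem_nhds hv₀)

lemma IntervalIntegrable.hext_comp {f : Proj d → ℝ} (hf : Continuous f) {g : ℝ → Euc d} {a b : ℝ}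
    (hg : IntervalIntegrable g volume a b) :
    IntervalIntegrable (fun t => hext f (g t)) volume a b := by
  obtain ⟨C, hC⟩ := exists_abs_hext_le hf
  refine (hg.norm.const_mul C).mono_fun
    ((continuous_hext hf).comp_aestronglyMeasurable hg.def'.aestronglyMeasurable) ?_
  filter_upwards with t
  simpa [abs_mul] using (hC (g t)).trans (le_abs_self _)

end Projective

section Embedding

variable {d : ℕ}

def sphEmb (x : Sph d) : Fin d → Fin d → ℝ := fun i j => (x : Euc d) i * (x : Euc d) j

lemma exists_coord_ne_zero (x : Sph d) : ∃ i, (x : Euc d) i ≠ 0 := by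
  by_contra! hx
  have h0 : (x : Euc d) = 0 := by ext i; exact hx i
  simpa [h0] using x.2

lemma sphEmb_eq_iff {x y : Sph d} :
    sphEmb x = sphEmb y ↔ (x : Euc d) = y ∨ (x : Euc d) = -y := by
  constructor
  · intro h
    have hxy : ∀ i j, (x : Euc d) i * (x : Euc d) j = (y : Euc d) i * (y : Euc d) j :=
      fun i j => congrFun (congrFun h i) j
    obtain ⟨i, hi⟩ := exists_coord_ne_zero x
    rcases mul_self_eq_mul_self_iff.1 (hxy i i) with hyi | hyi
    · refine Or.inl (PiLp.ext fun j => mul_left_cancel₀ hi ?_)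
      rw [hxy, hyi]
    · refine Or.inr (PiLp.ext fun j => mul_left_cancel₀ hi ?_)
      rw [hxy, PiLp.neg_apply, hyi]
      ring
  · rintro (h | h) <;> funext i j
    · simp [sphEmb, h]
    · simp [sphEmb, h]

lemma continuous_sphEmb : Continuous (sphEmb (d := d)) := by
  unfold sphEmb
  fun_prop

def projEmb : Proj d → Fin d → Fin d → ℝ :=
  Quotient.lift sphEmb fun _ _ h => sphEmb_eq_iff.2 h

lemma projEmb_injective : Function.Injective (projEmb (d := d)) := by
  rintro ⟨x⟩ ⟨y⟩ h
  exact Quotient.sound (sphEmb_eq_iff.1 h)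

lemma continuous_projEmb : Continuous (projEmb (d := d)) :=
  continuous_sphEmb.quotient_lift _

lemma injOn_sphEmb {s : Set (Sph d)} (i : Fin d)
    (hs : ∀ x ∈ s, ∀ y ∈ s, 0 < (x : Euc d) i * (y : Euc d) i) : InjOn sphEmb s := by
  intro x hx y hy hxy
  rcases sphEmb_eq_iff.1 hxy with h | h
  · exact Subtype.ext h
  · have hpos := hs x hx y hy
    rw [h, PiLp.neg_apply, neg_mul] at hpos
    nlinarith [mul_self_nonneg ((y : Euc d) i)]

lemma measurableSet_image_projEmb {s : Set (Proj d)} (hs : MeasurableSet s) :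
    MeasurableSet (projEmb '' s) := by
  set T : Set (Sph d) := Quotient.mk'' ⁻¹' s
  have hT : MeasurableSet T := measurableSet_quotient.1 hs
  -- `sphEmb` is injective on each hemisphere `xᵢ > 0`, `xᵢ < 0`, and these cover the sphere.
  have hcover : T = ⋃ i, (T ∩ {x | 0 < (x : Euc d) i}) ∪ (T ∩ {x | (x : Euc d) i < 0}) := by
    ext x
    simp only [mem_iUnion, mem_union, mem_inter_iff, mem_ofPred_eq, ← and_or_left,
      ← ne_iff_lt_or_gt]
    refine ⟨fun hx => ?_, fun ⟨_, hx, _⟩ => hx⟩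
    obtain ⟨i, hi⟩ := exists_coord_ne_zero x
    exact ⟨i, hx, hi.symm⟩
  rw [← image_preimage_eq s Quotient.mk''_surjective, image_image]
  change MeasurableSet (sphEmb '' T)
  rw [hcover, image_iUnion]
  refine MeasurableSet.iUnion fun i => ?_
  have hcoord : Measurable fun x : Sph d => (x : Euc d) i := by fun_prop
  rw [image_union]
  exact (hT.inter (hcoord measurableSet_Ioi)).image_of_continuousOn_injOn
      continuous_sphEmb.continuousOn (injOn_sphEmb i fun x hx y hy => mul_pos hx.2 hy.2) |>.union <|
    (hT.inter (hcoord measurableSet_Iio)).image_of_continuousOn_injOn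
      continuous_sphEmb.continuousOn
      (injOn_sphEmb i fun x hx y hy => mul_pos_of_neg_of_neg hx.2 hy.2)

lemma measurableEmbedding_projEmb : MeasurableEmbedding (projEmb (d := d)) :=
  ⟨projEmb_injective, measurable_from_quotient.2 continuous_sphEmb.measurable,
    fun _ => measurableSet_image_projEmb⟩

theorem Proj.ext_of_forall_integral_eq {μ ν : Measure (Proj d)} [IsFiniteMeasure μ]
    [IsFiniteMeasure ν] (h : ∀ f : Proj d → ℝ, Continuous f → ∫ x, f x ∂μ = ∫ x, f x ∂ν) :
    μ = ν := by
  have he := measurableEmbedding_projEmb (d := d)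
  refine he.map_injective (ext_of_forall_integral_eq_of_IsFiniteMeasure fun F => ?_)
  rw [he.integral_map, he.integral_map]
  exact h _ (F.continuous.comp continuous_projEmb)

end Embedding

theorem stmt12_general {d : ℕ} (α g : ℝ → Euc d) (hα : IsACDeriv α g)
    (φ ψ : ℝ → ℝ) (hφac : IsACDeriv φ ψ)
    (hmono : MonotoneOn φ (Icc 0 1) ∨ AntitoneOn φ (Icc 0 1))
    (hmaps : MapsTo φ (Icc 0 1) (Icc 0 1))
    (hsurj : SurjOn φ (Icc 0 1) (Icc 0 1)) :
    (∃ h : ℝ → Euc d, IsACDeriv (fun s => α (φ s)) h) ∧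
    ∀ (h : ℝ → Euc d) (μ μ' : Measure (Proj d)),
      IsACDeriv (fun s => α (φ s)) h →
      IsCurveMeasure g μ → IsCurveMeasure h μ' → μ' = μ := by
  have hcomp : IsACDeriv (fun s => α (φ s)) fun t => ψ t • g (φ t) :=
    hα.isACDerivOn.comp zero_le_one hφac hmono hmaps
  refine ⟨⟨_, hcomp⟩, fun h μ μ' hh hμ hμ' => ?_⟩
  have := hμ.1
  have := hμ'.1
  refine Proj.ext_of_forall_integral_eq fun f hf => ?_
  have hg : IntervalIntegrable g volume (φ 0) (φ 1) := by
    rw [intervalIntegrable_iff, uIoc_eq_of_surjOn zero_le_one hmono hmaps hsurj]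
    exact hα.1.1
  calc ∫ x, f x ∂μ' = ∫ t in Ioc 0 1, hext f (ψ t • g (φ t)) := by
        rw [hμ'.2 f hf, intervalIntegral.integral_of_le zero_le_one]
        refine integral_congr_ae ?_
        filter_upwards [hh.isACDerivOn.ae_eq hcomp.isACDerivOn] with t ht
        rw [ht]
    _ = ∫ t in Ioc 0 1, |ψ t| • hext f (g (φ t)) := by simp only [hext_smul, smul_eq_mul]
    _ = ∫ y in Ι (φ 0) (φ 1), hext f (g y) :=
        hφac.isACDerivOn.integral_abs_smul_comp zero_le_one hmono (hg.hext_comp hf)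
    _ = ∫ x, f x ∂μ := by
        rw [uIoc_eq_of_surjOn zero_le_one hmono hmaps hsurj, hμ.2 f hf,
          intervalIntegral.integral_of_le zero_le_one]

/-- If `α : [0,1] → ℝ^d` is absolutely continuous and
`φ : [0,1] → [0,1]` is monotonic, absolutely continuous and surjective, then
the reparametrized curve `α ∘ φ` is absolutely continuous and produces the
same measure: `μ_{α∘φ} = μ_α`. -/
theorem stmt12 {d : ℕ} (hd : 1 ≤ d) (α g : ℝ → Euc d) (hα : IsACDeriv α g)
    (φ ψ : ℝ → ℝ) (hφac : IsACDeriv φ ψ)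
    (hmono : MonotoneOn φ (Icc 0 1) ∨ AntitoneOn φ (Icc 0 1))
    (hmaps : MapsTo φ (Icc 0 1) (Icc 0 1))
    (hsurj : SurjOn φ (Icc 0 1) (Icc 0 1)) :
    (∃ h : ℝ → Euc d, IsACDeriv (fun s => α (φ s)) h) ∧
    ∀ (h : ℝ → Euc d) (μ μ' : Measure (Proj d)),
      IsACDeriv (fun s => α (φ s)) h →
      IsCurveMeasure g μ → IsCurveMeasure h μ' → μ' = μ :=
  stmt12_general α g hα φ ψ hφac hmono hmaps hsurj
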